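/- arXiv:2306.17425 — 3 statements merged into one kernel-verified Lean document; each statement's English description precedes it below -/
import Mathlib

section
/- If a, b ∈ [0,1] then (1/2)(a − b)² ≤ a·log(a/b) − (a − b), where the right-hand side is interpreted as +∞ if b = 0 < a and as b if a = 0 (with 0·log 0 = 0). -/
open Real Set

/- For fixed `b ∈ (0, 1]` the gap `pinskerGap b a` vanishes at `a = b` and has derivative
`log (a / b) - (a - b)` in `a`. The bounds `1 - b / a ≤ log (a / b) ≤ a / b - 1`, together
with `a, b ≤ 1`, make this derivative nonpositive left of `b` and nonnegative right of it, so
the gap is minimal at `a = b`. -/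

section
variable {a b : ℝ}

lemma log_div_le_sub_of_le (hb1 : b ≤ 1) (ha : 0 < a) (hab : a ≤ b) :
    log (a / b) ≤ a - b := by
  have hb : 0 < b := ha.trans_le hab
  calc log (a / b) ≤ a / b - 1 := log_le_sub_one_of_pos (div_pos ha hb)
    _ = (a - b) / b := by field_simp
    _ ≤ a - b := by rw [div_le_iff₀ hb]; nlinarith

lemma sub_le_log_div_of_le (ha1 : a ≤ 1) (hb : 0 < b) (hba : b ≤ a) :
    a - b ≤ log (a / b) := by
  have ha : 0 < a := hb.trans_le hba
  calc a - b ≤ (a - b) / a := le_div_self (by linarith) ha ha1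
    _ = 1 - (a / b)⁻¹ := by field_simp
    _ ≤ log (a / b) := one_sub_inv_le_log_of_pos (div_pos ha hb)

lemma continuous_mul_log_div (hb : b ≠ 0) : Continuous fun x ↦ x * log (x / b) := by
  have h : (fun x ↦ x * log (x / b)) = fun x ↦ b * (x / b * log (x / b)) := by
    funext x; field_simp
  rw [h]
  exact (continuous_mul_log.comp (continuous_id.div_const b)).const_mul b

lemma hasDerivAt_mul_log_div (hb : b ≠ 0) (ha : a ≠ 0) :
    HasDerivAt (fun x ↦ x * log (x / b)) (log (a / b) + 1) a := by
  refine ((hasDerivAt_id' a).mul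
    (((hasDerivAt_id' a).div_const b).log (div_ne_zero ha hb))).congr_deriv ?_
  field_simp

end

noncomputable def pinskerGap (b a : ℝ) : ℝ := a * log (a / b) - (a - b) - (a - b) ^ 2 / 2

section
variable {b : ℝ}

@[simp]
lemma pinskerGap_self : pinskerGap b b = 0 := by simp [pinskerGap]

lemma continuous_pinskerGap (hb : b ≠ 0) : Continuous (pinskerGap b) := by
  have := continuous_mul_log_div hb
  unfold pinskerGap
  fun_prop

lemma hasDerivAt_pinskerGap (hb : b ≠ 0) {a : ℝ} (ha : a ≠ 0) :
    HasDerivAt (pinskerGap b) (log (a / b) - (a - b)) a := by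
  refine (((hasDerivAt_mul_log_div hb ha).sub ((hasDerivAt_id' a).sub_const b)).sub
    (((hasDerivAt_id' a).sub_const b).pow 2 |>.div_const 2)).congr_deriv ?_
  ring

lemma antitoneOn_pinskerGap (hb : b ∈ Ioc (0 : ℝ) 1) : AntitoneOn (pinskerGap b) (Icc 0 b) := by
  refine antitoneOn_of_hasDerivWithinAt_nonpos (f' := fun x ↦ log (x / b) - (x - b))
    (convex_Icc 0 b)
    (continuous_pinskerGap hb.1.ne').continuousOn (fun x hx ↦ ?_) (fun x hx ↦ ?_) <;>
    rw [interior_Icc] at hx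
  · exact (hasDerivAt_pinskerGap hb.1.ne' hx.1.ne').hasDerivWithinAt
  · linarith [log_div_le_sub_of_le hb.2 hx.1 hx.2.le]

lemma monotoneOn_pinskerGap (hb : 0 < b) : MonotoneOn (pinskerGap b) (Icc b 1) := by
  refine monotoneOn_of_hasDerivWithinAt_nonneg (f' := fun x ↦ log (x / b) - (x - b))
    (convex_Icc b 1)
    (continuous_pinskerGap hb.ne').continuousOn (fun x hx ↦ ?_) (fun x hx ↦ ?_) <;>
    rw [interior_Icc] at hx
  · exact (hasDerivAt_pinskerGap hb.ne' (hb.trans hx.1).ne').hasDerivWithinAt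
  · linarith [sub_le_log_div_of_le hx.2.le hb hx.1.le]

lemma pinskerGap_nonneg {a : ℝ} (ha : a ∈ Icc (0 : ℝ) 1) (hb : b ∈ Ioc (0 : ℝ) 1) :
    0 ≤ pinskerGap b a := by
  rw [← pinskerGap_self (b := b)]
  rcases le_total a b with hab | hba
  · exact antitoneOn_pinskerGap hb ⟨ha.1, hab⟩ ⟨hb.1.le, le_rfl⟩ hab
  · exact monotoneOn_pinskerGap hb.1 ⟨le_rfl, hb.2⟩ ⟨hba, ha.2⟩ hba

end

/-- Csiszár–Kullback-type pointwise estimate: for a, b ∈ [0,1],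
(1/2)(a − b)² ≤ a log(a/b) − (a − b), under the convention that
the right-hand side is +∞ if b = 0 < a (excluded here by the hypothesis
`0 < b ∨ a = 0`, where the inequality is trivially true) and equals b
if a = 0 (with 0·log 0 = 0, Mathlib's convention). -/
theorem stmt5 (a b : ℝ) (ha : a ∈ Set.Icc (0:ℝ) 1) (hb : b ∈ Set.Icc (0:ℝ) 1)
    (hcase : 0 < b ∨ a = 0) :
    (1/2) * (a - b)^2 ≤ a * Real.log (a / b) - (a - b) := by
  rcases hb.1.eq_or_lt with rfl | hb0
  · obtain rfl : a = 0 := hcase.resolve_left (lt_irrefl 0)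
    norm_num
  · have := pinskerGap_nonneg ha ⟨hb0, hb.2⟩
    unfold pinskerGap at this
    linarith
end

section
/- Let q ∈ C¹([0,1]) be convex and increasing with q(0)=0, q(1)=1, and suppose there exist β ∈ [0,1], c₀ > 0 with q'(s)/q(s) ≥ c₀ s^{-β} for s ∈ (0,1]. Fix m ∈ (0,1] with q̄ ≥ q(m) where q̄ ∈ (0,1]. If ε₀ > 0 and Q ∈ [0,1] satisfies Q/q̄ > 1 + ε₀, then ∫_1^{Q/q̄} log( q(q̄σ)/q(q̄) ) dσ ≥ (ε₀/2)·log(1 + c₀ q(m)^{1−β} ε₀/2). -/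
open Set Filter Real MeasureTheory intervalIntegral

/-!
Write `f σ = log (q (q̄σ) / q q̄)`. Since `q` is increasing, `f` is monotone with `f 1 = 0`, so the
integral over `[1, Q/q̄]` is at least `(Q/q̄ - 1 - ε₀/2) f (1 + ε₀/2) ≥ (ε₀/2) f (1 + ε₀/2)`.
At `σ = 1 + ε₀/2`, the tangent line of the convex function `q` at `q̄` gives
`q (q̄σ) ≥ q q̄ + q'(q̄) q̄ (σ - 1)`, and the ratio bound turns `q'(q̄) q̄` into at least
`c₀ q(q̄) q̄^{1-β} ≥ c₀ q(q̄) q(m)^{1-β}`.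
-/

lemma ConvexOn.deriv_mul_sub_le_sub {S : Set ℝ} {f : ℝ → ℝ} {f' x y : ℝ}
    (hf : ConvexOn ℝ S f) (hx : x ∈ S) (hy : y ∈ S) (hxy : x ≤ y) (hf' : HasDerivAt f f' x) :
    f' * (y - x) ≤ f y - f x := by
  rcases hxy.eq_or_lt with rfl | hlt
  · simp
  have hslope := hf.le_slope_of_hasDerivAt hx hy hlt hf'
  rwa [slope_def_field, le_div_iff₀ (sub_pos.2 hlt)] at hslope

lemma MonotoneOn.sub_mul_le_intervalIntegral {f : ℝ → ℝ} {a b c : ℝ}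
    (hf : MonotoneOn f (Icc a b)) (hfa : 0 ≤ f a) (hac : a ≤ c) (hcb : c ≤ b) :
    (b - c) * f c ≤ ∫ x in a..b, f x := by
  have hab := hac.trans hcb
  have hint : ∀ {u v}, a ≤ u → u ≤ v → v ≤ b → IntervalIntegrable f volume u v :=
    fun hau huv hvb => MonotoneOn.intervalIntegrable <| by
      rw [uIcc_of_le huv]; exact hf.mono (Icc_subset_Icc hau hvb)
  have hleft : 0 ≤ ∫ x in a..c, f x :=
    integral_nonneg hac fun x hx =>
      hfa.trans (hf (left_mem_Icc.2 hab) ⟨hx.1, hx.2.trans hcb⟩ hx.1)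
  have hright : ∫ _ in c..b, f c ≤ ∫ x in c..b, f x :=
    integral_mono_on hcb intervalIntegrable_const (hint hac hcb le_rfl) fun x hx =>
      hf ⟨hac, hcb⟩ ⟨hac.trans hx.1, hx.2⟩ hx.1
  rw [← integral_add_adjacent_intervals (hint le_rfl hac hcb) (hint hac hcb le_rfl)]
  rw [intervalIntegral.integral_const, smul_eq_mul] at hright
  linarith

lemma ConvexOn.mul_one_add_rpow_le {S : Set ℝ} {q : ℝ → ℝ} {q'x β c₀ x σ : ℝ}
    (hqconv : ConvexOn ℝ S q) (hq : HasDerivAt q q'x x) (hx : x ∈ S) (hxσ : x * σ ∈ S)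
    (hx0 : 0 < x) (hqx : 0 < q x) (hratio : c₀ ≤ x ^ β * q'x / q x) (hσ : 1 ≤ σ) :
    q x * (1 + c₀ * x ^ (1 - β) * (σ - 1)) ≤ q (x * σ) := by
  have htangent : q'x * (x * σ - x) ≤ q (x * σ) - q x :=
    hqconv.deriv_mul_sub_le_sub hx hxσ (by nlinarith) hq
  have hderiv : c₀ * q x * x ^ (1 - β) ≤ q'x * x := by
    rw [le_div_iff₀ hqx] at hratio
    calc c₀ * q x * x ^ (1 - β) ≤ x ^ β * q'x * x ^ (1 - β) := by gcongr
      _ = q'x * x := by rw [mul_right_comm, ← rpow_add hx0, add_sub_cancel, rpow_one, mul_comm]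
  nlinarith [mul_le_mul_of_nonneg_right hderiv (sub_nonneg.2 hσ)]

theorem stmt10_general (q q' : ℝ → ℝ) (β c₀ m qbar ε₀ Q : ℝ)
    (hq_diff : ∀ s ∈ Icc (0:ℝ) 1, HasDerivAt q (q' s) s)
    (hqconv : ConvexOn ℝ (Icc 0 1) q)
    (hqmono : StrictMonoOn q (Icc 0 1))
    (hq0 : q 0 = 0)
    (hβ : β ∈ Icc (0:ℝ) 1) (hc₀ : 0 < c₀)
    (hratio : ∀ s ∈ Ioc (0:ℝ) 1, c₀ ≤ s ^ β * q' s / q s)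
    (hm : m ∈ Ioc (0:ℝ) 1) (hqbar : qbar ∈ Ioc (0:ℝ) 1)
    (hqbar_ge : q m ≤ qbar)
    (hε₀ : 0 < ε₀) (hQ : Q ∈ Icc (0:ℝ) 1) (hQq : 1 + ε₀ < Q / qbar) :
    (ε₀ / 2) * Real.log (1 + c₀ * q m ^ (1 - β) * (ε₀ / 2))
      ≤ ∫ σ in (1:ℝ)..(Q / qbar), Real.log (q (qbar * σ) / q qbar) := by
  have hqpos : ∀ s ∈ Ioc (0:ℝ) 1, 0 < q s := fun s hs =>
    hq0 ▸ hqmono (left_mem_Icc.2 zero_le_one) (Ioc_subset_Icc_self hs) hs.1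
  have hqbarpos := hqpos qbar hqbar
  have hqmpos := hqpos m hm
  have hray : ∀ σ ∈ Icc 1 (Q / qbar), qbar * σ ∈ Ioc (0:ℝ) 1 := fun σ hσ =>
    ⟨by nlinarith [hqbar.1, hσ.1], (mul_le_mul_of_nonneg_left hσ.2 hqbar.1.le).trans
      (by rw [mul_div_cancel₀ _ hqbar.1.ne']; exact hQ.2)⟩
  have hmono : MonotoneOn (fun σ => log (q (qbar * σ) / q qbar)) (Icc 1 (Q / qbar)) :=
    fun σ hσ τ hτ hστ => log_le_log (div_pos (hqpos _ (hray σ hσ)) hqbarpos) <| by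
      gcongr
      exact hqmono.monotoneOn (Ioc_subset_Icc_self (hray σ hσ)) (Ioc_subset_Icc_self (hray τ hτ))
        (by gcongr; exact hqbar.1.le)
  have hgrowth : 1 + c₀ * q m ^ (1 - β) * (ε₀ / 2) ≤ q (qbar * (1 + ε₀ / 2)) / q qbar := by
    rw [le_div_iff₀' hqbarpos]
    refine le_trans ?_ <| hqconv.mul_one_add_rpow_le (hq_diff _ (Ioc_subset_Icc_self hqbar))
      (Ioc_subset_Icc_self hqbar) (Ioc_subset_Icc_self (hray _ ⟨by linarith, by linarith⟩))
      hqbar.1 hqbarpos (hratio _ hqbar) (by linarith)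
    have : q m ^ (1 - β) ≤ qbar ^ (1 - β) := rpow_le_rpow hqmpos.le hqbar_ge (by linarith [hβ.2])
    have := rpow_pos_of_pos hqbar.1 (1 - β)
    gcongr
    linarith
  have hlog_nonneg : 0 ≤ log (1 + c₀ * q m ^ (1 - β) * (ε₀ / 2)) :=
    log_nonneg (le_add_of_nonneg_right (by positivity))
  calc (ε₀ / 2) * log (1 + c₀ * q m ^ (1 - β) * (ε₀ / 2))
      ≤ (Q / qbar - (1 + ε₀ / 2)) * log (q (qbar * (1 + ε₀ / 2)) / q qbar) :=
        mul_le_mul (by linarith) (log_le_log (by positivity) hgrowth) hlog_nonneg (by linarith)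
    _ ≤ ∫ σ in (1:ℝ)..(Q / qbar), log (q (qbar * σ) / q qbar) :=
        hmono.sub_mul_le_intervalIntegral (by simp [hqbarpos.ne']) (by linarith) (by linarith)

/-- Lower bound in the case Q/q̄ > 1 + ε₀: for q ∈ C¹([0,1]) convex and
increasing with q(0)=0, q(1)=1, ratio bound s^β q'(s)/q(s) ≥ c₀ on (0,1],
and q̄ ∈ (0,1] with q̄ ≥ q(m),
∫_1^{Q/q̄} log(q(q̄σ)/q(q̄)) dσ ≥ (ε₀/2) log(1 + c₀ q(m)^{1−β} ε₀/2). -/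
theorem stmt10 (q q' : ℝ → ℝ) (β c₀ m qbar ε₀ Q : ℝ)
    (hq_diff : ∀ s ∈ Icc (0:ℝ) 1, HasDerivAt q (q' s) s)
    (hq'_cont : ContinuousOn q' (Icc 0 1))
    (hqconv : ConvexOn ℝ (Icc 0 1) q)
    (hqmono : StrictMonoOn q (Icc 0 1))
    (hq0 : q 0 = 0) (hq1 : q 1 = 1)
    (hβ : β ∈ Icc (0:ℝ) 1) (hc₀ : 0 < c₀)
    (hratio : ∀ s ∈ Ioc (0:ℝ) 1, c₀ ≤ s ^ β * q' s / q s)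
    (hm : m ∈ Ioc (0:ℝ) 1) (hqbar : qbar ∈ Ioc (0:ℝ) 1)
    (hqbar_ge : q m ≤ qbar)
    (hε₀ : 0 < ε₀) (hQ : Q ∈ Icc (0:ℝ) 1) (hQq : 1 + ε₀ < Q / qbar) :
    (ε₀ / 2) * Real.log (1 + c₀ * q m ^ (1 - β) * (ε₀ / 2))
      ≤ ∫ σ in (1:ℝ)..(Q / qbar), Real.log (q (qbar * σ) / q qbar) :=
  stmt10_general q q' β c₀ m qbar ε₀ Q hq_diff hqconv hqmono hq0 hβ hc₀ hratio hm hqbar hqbar_ge hε₀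
    hQ hQq
end

section
/- Let (qₙ), (q̄ₙ) be sequences in (0,1] with q̄ₙ ≥ c for a fixed c > 0, and suppose a sequence of nonnegative numbers fₙ := q̄ₙ ∫_1^{qₙ/q̄ₙ} log(q(q̄ₙ σ)/q(q̄ₙ)) dσ tends to 0, where q is convex, C¹, increasing on [0,1] with q(0)=0 and s^β q'(s)/q(s) ≥ c₀ > 0 on (0,1] for some β ∈ [0,1]. Then qₙ/q̄ₙ → 1. -/
/-!
The ratio condition gives `(log q)' = q'/q ≥ c₀ s^(-β) ≥ c₀` on `(0,1]`, so `σ ↦ log q(q̄ σ)`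
grows at rate at least `c₀ q̄`. Hence on the oriented interval from `1` to `r = qₙ/q̄ₙ` the
integrand `log (q(q̄ₙ σ)/q(q̄ₙ))` has the sign of `σ - 1` and size at least `c₀ q̄ₙ |σ - 1|`,
which gives `fₙ ≥ c₀ q̄ₙ² (r - 1)²/2 ≥ c₀ c² (r - 1)²/2`. So `fₙ → 0` forces `r → 1`.
-/

open Set Filter Real MeasureTheory intervalIntegral Topology

theorem integral_mul_sub_eq (k a r : ℝ) :
    ∫ σ in a..r, k * (σ - a) = k * (r - a) ^ 2 / 2 := by
  simp [integral_comp_sub_right (fun x => x) a]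
  ring

theorem mul_sq_div_two_le_integral_sub {G : ℝ → ℝ} {k a r : ℝ} (hk : 0 ≤ k)
    (hG : ∀ x ∈ uIcc a r, ∀ y ∈ uIcc a r, x ≤ y → k * (y - x) ≤ G y - G x) :
    k * (r - a) ^ 2 / 2 ≤ ∫ σ in a..r, (G σ - G a) := by
  have hmono : MonotoneOn G (uIcc a r) := fun x hx y hy hxy => by
    nlinarith [hG x hx y hy hxy, mul_nonneg hk (sub_nonneg.2 hxy)]
  have hint : IntervalIntegrable (fun σ => G σ - G a) volume a r :=
    hmono.intervalIntegrable.sub intervalIntegrable_const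
  have hlin : ∀ u v, IntervalIntegrable (fun σ => k * (σ - a)) volume u v := fun u v =>
    (continuous_const.mul (continuous_id.sub continuous_const)).intervalIntegrable u v
  rcases le_total a r with har | hra
  · rw [← integral_mul_sub_eq]
    exact integral_mono_on har (hlin a r) hint fun σ hσ =>
      hG a left_mem_uIcc σ (Icc_subset_uIcc hσ) hσ.1
  · have hle : ∫ σ in r..a, (G σ - G a) ≤ ∫ σ in r..a, k * (σ - a) :=
      integral_mono_on hra hint.symm (hlin r a) fun σ hσ => by
        nlinarith [hG σ (Icc_subset_uIcc' hσ) a left_mem_uIcc hσ.2]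
    simp only [integral_symm a r, integral_mul_sub_eq] at hle
    linarith

theorem mul_sub_le_log_sub_log {f f' : ℝ → ℝ} {D : Set ℝ} {C : ℝ} (hD : Convex ℝ D)
    (hf : ∀ x ∈ D, HasDerivAt f (f' x) x) (hf0 : ∀ x ∈ D, f x ≠ 0)
    (hC : ∀ x ∈ D, C ≤ f' x / f x) {x y : ℝ} (hx : x ∈ D) (hy : y ∈ D) (hxy : x ≤ y) :
    C * (y - x) ≤ log (f y) - log (f x) := by
  have hlog : ∀ x ∈ D, HasDerivAt (fun x => log (f x)) (f' x / f x) x := fun x hx =>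
    (hf x hx).log (hf0 x hx)
  refine hD.mul_sub_le_image_sub_of_le_deriv
    (fun x hx => (hlog x hx).continuousAt.continuousWithinAt)
    (fun x hx => (hlog x (interior_subset hx)).differentiableAt.differentiableWithinAt)
    (fun x hx => ?_) x hx y hy hxy
  rw [(hlog x (interior_subset hx)).deriv]
  exact hC x (interior_subset hx)

theorem ne_zero_and_le_div_of_le_rpow_mul_div {β c₀ s x y : ℝ} (hβ : 0 ≤ β) (hc₀ : 0 < c₀)
    (hs : s ∈ Ioc 0 1) (h : c₀ ≤ s ^ β * y / x) : x ≠ 0 ∧ c₀ ≤ y / x := by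
  have hsβ : 0 < s ^ β := rpow_pos_of_pos hs.1 β
  have hsβ1 : s ^ β ≤ 1 := rpow_le_one hs.1.le hs.2 hβ
  rw [mul_div_assoc] at h
  -- `x = 0` would make the right-hand side `s ^ β * (y / 0) = 0 < c₀`.
  refine ⟨fun hx => by simp [hx] at h; linarith, ?_⟩
  nlinarith [mul_pos hsβ (lt_of_lt_of_le hc₀ h)]

theorem mul_sq_div_two_le_integral_log_div {q q' : ℝ → ℝ} {c₀ b x : ℝ} (hc₀ : 0 ≤ c₀)
    (hq : ∀ s ∈ Ioc (0:ℝ) 1, HasDerivAt q (q' s) s) (hq0 : ∀ s ∈ Ioc (0:ℝ) 1, q s ≠ 0)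
    (hC : ∀ s ∈ Ioc (0:ℝ) 1, c₀ ≤ q' s / q s) (hb : b ∈ Ioc (0:ℝ) 1) (hx : x ∈ Ioc (0:ℝ) 1) :
    c₀ * b * (x / b - 1) ^ 2 / 2 ≤ ∫ σ in (1:ℝ)..(x / b), log (q (b * σ) / q b) := by
  have hmaps : MapsTo (b * ·) (uIcc 1 (x / b)) (Ioc 0 1) := by
    rw [mapsTo_iff_image_subset, image_const_mul_uIcc, mul_one, mul_div_cancel₀ x hb.1.ne']
    exact ordConnected_Ioc.uIcc_subset hb hx
  have := mul_sq_div_two_le_integral_sub (G := fun σ => log (q (b * σ))) (mul_nonneg hc₀ hb.1.le)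
    fun σ hσ τ hτ hστ => by
      rw [mul_assoc, mul_sub]
      exact mul_sub_le_log_sub_log (convex_Ioc 0 1) hq hq0 hC (hmaps hσ) (hmaps hτ)
        (mul_le_mul_of_nonneg_left hστ hb.1.le)
  convert this using 1
  refine integral_congr fun σ hσ => ?_
  simp only [mul_one]
  rw [log_div (hq0 _ (hmaps hσ)) (hq0 b hb)]

theorem tendsto_of_mul_sq_sub_le {α : Type*} {l : Filter α} {u f : α → ℝ} {K a : ℝ}
    (hK : 0 < K) (hf : Tendsto f l (𝓝 0)) (h : ∀ n, K * (u n - a) ^ 2 ≤ f n) :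
    Tendsto u l (𝓝 a) := by
  have hsq : Tendsto (fun n => (u n - a) ^ 2) l (𝓝 0) := by
    refine squeeze_zero (fun n => sq_nonneg _) (fun n => (le_div_iff₀' hK).2 (h n)) ?_
    simpa using hf.div_const K
  rw [tendsto_iff_norm_sub_tendsto_zero]
  simpa [sqrt_sq_eq_abs] using hsq.sqrt

theorem stmt13_general (q q' : ℝ → ℝ) (β c₀ c : ℝ) (qn qbarn : ℕ → ℝ)
    (hq_diff : ∀ s ∈ Icc (0:ℝ) 1, HasDerivAt q (q' s) s)
    (hβ : β ∈ Icc (0:ℝ) 1) (hc₀ : 0 < c₀)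
    (hratio : ∀ s ∈ Ioc (0:ℝ) 1, c₀ ≤ s ^ β * q' s / q s)
    (hc : 0 < c)
    (hqn : ∀ n, qn n ∈ Ioc (0:ℝ) 1) (hqbarn : ∀ n, qbarn n ∈ Ioc (0:ℝ) 1)
    (hqbarn_ge : ∀ n, c ≤ qbarn n)
    (hfn : Tendsto (fun n => qbarn n *
        ∫ σ in (1:ℝ)..(qn n / qbarn n), Real.log (q (qbarn n * σ) / q (qbarn n)))
      atTop (nhds 0)) :
    Tendsto (fun n => qn n / qbarn n) atTop (nhds 1) := by
  have hlogDeriv (s : ℝ) (hs : s ∈ Ioc (0:ℝ) 1) : q s ≠ 0 ∧ c₀ ≤ q' s / q s :=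
    ne_zero_and_le_div_of_le_rpow_mul_div hβ.1 hc₀ hs (hratio s hs)
  refine tendsto_of_mul_sq_sub_le (K := c₀ * c ^ 2 / 2) (by positivity) hfn fun n => ?_
  have hb := hqbarn n
  have hc_sq : c ^ 2 ≤ qbarn n ^ 2 := pow_le_pow_left₀ hc.le (hqbarn_ge n) 2
  calc c₀ * c ^ 2 / 2 * (qn n / qbarn n - 1) ^ 2
      ≤ qbarn n * (c₀ * qbarn n * (qn n / qbarn n - 1) ^ 2 / 2) := by
        nlinarith [mul_le_mul_of_nonneg_right hc_sq
          (mul_nonneg hc₀.le (sq_nonneg (qn n / qbarn n - 1)))]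
    _ ≤ _ := mul_le_mul_of_nonneg_left (mul_sq_div_two_le_integral_log_div hc₀.le
        (fun s hs => hq_diff s (Ioc_subset_Icc_self hs)) (fun s hs => (hlogDeriv s hs).1)
        (fun s hs => (hlogDeriv s hs).2) hb (hqn n)) hb.1.le

/-- If q is convex, C¹, increasing on [0,1] with q(0)=0, q(1)=1 and
s^β q'(s)/q(s) ≥ c₀ > 0 on (0,1], and (qₙ), (q̄ₙ) ⊂ (0,1] with q̄ₙ ≥ c > 0
are such that fₙ = q̄ₙ ∫_1^{qₙ/q̄ₙ} log(q(q̄ₙσ)/q(q̄ₙ)) dσ ≥ 0 tends to 0,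
then qₙ/q̄ₙ → 1. -/
theorem stmt13 (q q' : ℝ → ℝ) (β c₀ c : ℝ) (qn qbarn : ℕ → ℝ)
    (hq_diff : ∀ s ∈ Icc (0:ℝ) 1, HasDerivAt q (q' s) s)
    (hq'_cont : ContinuousOn q' (Icc 0 1))
    (hqconv : ConvexOn ℝ (Icc 0 1) q)
    (hqmono : StrictMonoOn q (Icc 0 1))
    (hq0 : q 0 = 0) (hq1 : q 1 = 1)
    (hβ : β ∈ Icc (0:ℝ) 1) (hc₀ : 0 < c₀)
    (hratio : ∀ s ∈ Ioc (0:ℝ) 1, c₀ ≤ s ^ β * q' s / q s)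
    (hc : 0 < c)
    (hqn : ∀ n, qn n ∈ Ioc (0:ℝ) 1) (hqbarn : ∀ n, qbarn n ∈ Ioc (0:ℝ) 1)
    (hqbarn_ge : ∀ n, c ≤ qbarn n)
    (hfn_nonneg : ∀ n, 0 ≤ qbarn n *
      ∫ σ in (1:ℝ)..(qn n / qbarn n), Real.log (q (qbarn n * σ) / q (qbarn n)))
    (hfn : Tendsto (fun n => qbarn n *
        ∫ σ in (1:ℝ)..(qn n / qbarn n), Real.log (q (qbarn n * σ) / q (qbarn n)))
      atTop (nhds 0)) :
    Tendsto (fun n => qn n / qbarn n) atTop (nhds 1) :=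
  stmt13_general q q' β c₀ c qn qbarn hq_diff hβ hc₀ hratio hc hqn hqbarn hqbarn_ge hfn
end
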